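/- (Batched leakage equation.) Let the batch loss be L(Q,K,V) = Σ_{i=1}^{n} g_i(Q z_i, K z_i, V z_i) for fixed embeddings z_1, …, z_n ∈ ℝ^{c×p} and differentiable g_i : ℝ^{d×p} × ℝ^{d×p} × ℝ^{d×p} → ℝ. Let M_i ∈ ℝ^{c×p} denote the gradient matrix of z ↦ g_i(Qz, Kz, Vz) at z_i. Then Qᵀ(∇_Q L) + Kᵀ(∇_K L) + Vᵀ(∇_V L) = Σ_{i=1}^{n} M_i z_iᵀ; in particular, the shared batch gradients only determine the sum Σ_i M_i z_iᵀ of the per-sample products, not the individual products M_i z_iᵀ. -/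

import Mathlib

/-!
Each per-sample loss depends on `Q` only through `Q * z i`, so by the chain rule and
`trace (Gᵀ * (H * z)) = trace ((G * zᵀ)ᵀ * H)` its `Q`-gradient is `Gq i * (z i)ᵀ`, and the batch
gradient is `∇_Q L = ∑ i, Gq i * (z i)ᵀ` (likewise for `K`, `V`). Differentiating instead in the
input `z`, `trace (Gᵀ * (Q * H)) = trace ((Qᵀ * G)ᵀ * H)` gives
`M i = Qᵀ * Gq i + Kᵀ * Gk i + Vᵀ * Gv i`. Multiplying `M i` on the right by `(z i)ᵀ` and summing
over the batch gives the identity, since gradients are unique.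
-/

open Matrix

attribute [local instance] Matrix.normedAddCommGroup Matrix.normedSpace

noncomputable section

/-- `G` is the gradient matrix of the scalar function `F` at `X`:
it represents the Fréchet derivative of `F` at `X` via the Frobenius
inner product, `(dF)(H) = trace (Gᵀ * H)`. -/
def HasGradientMatrixAt {α β : Type*} [Fintype α] [Fintype β]
    (F : Matrix α β ℝ → ℝ) (G : Matrix α β ℝ) (X : Matrix α β ℝ) : Prop :=
  ∃ D : Matrix α β ℝ →L[ℝ] ℝ, HasFDerivAt F D X ∧ ∀ H, D H = Matrix.trace (Gᵀ * H)

/-- `(Gq, Gk, Gv)` are the gradient matrices of `g` with respect to its three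
matrix arguments at the point `x = (q, k, v)`, i.e. they represent the Fréchet
derivative of `g` at `x` via the Frobenius inner product. -/
def HasGradientTripleAt {d p : ℕ}
    (g : Matrix (Fin d) (Fin p) ℝ × Matrix (Fin d) (Fin p) ℝ × Matrix (Fin d) (Fin p) ℝ → ℝ)
    (Gq Gk Gv : Matrix (Fin d) (Fin p) ℝ)
    (x : Matrix (Fin d) (Fin p) ℝ × Matrix (Fin d) (Fin p) ℝ × Matrix (Fin d) (Fin p) ℝ) :
    Prop :=
  ∃ D : (Matrix (Fin d) (Fin p) ℝ × Matrix (Fin d) (Fin p) ℝ × Matrix (Fin d) (Fin p) ℝ) →L[ℝ] ℝ,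
    HasFDerivAt g D x ∧
    ∀ Hq Hk Hv, D (Hq, Hk, Hv) =
      Matrix.trace (Gqᵀ * Hq) + Matrix.trace (Gkᵀ * Hk) + Matrix.trace (Gvᵀ * Hv)

namespace HasGradientMatrixAt

variable {α β : Type*} [Fintype α] [Fintype β]

theorem unique {F : Matrix α β ℝ → ℝ} {G G' X : Matrix α β ℝ}
    (h : HasGradientMatrixAt F G X) (h' : HasGradientMatrixAt F G' X) : G = G' := by
  obtain ⟨D, hD, hDG⟩ := h
  obtain ⟨D', hD', hDG'⟩ := h'
  have hDD' : D = D' := hD.unique hD'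
  refine transpose_inj.mp (ext_iff_trace_mul_right.mpr fun H => ?_)
  rw [← hDG, ← hDG', hDD']

theorem sum {ι : Type*} (s : Finset ι) {F : ι → Matrix α β ℝ → ℝ} {G : ι → Matrix α β ℝ}
    {X : Matrix α β ℝ} (h : ∀ i, HasGradientMatrixAt (F i) (G i) X) :
    HasGradientMatrixAt (fun Y => ∑ i ∈ s, F i Y) (∑ i ∈ s, G i) X := by
  choose D hD hDG using h
  refine ⟨∑ i ∈ s, D i, HasFDerivAt.fun_sum fun i _ => hD i, fun H => ?_⟩
  simp only [FunLike.coe_sum, Finset.sum_apply, hDG, transpose_sum, Matrix.sum_mul,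
    trace_sum]

end HasGradientMatrixAt

theorem trace_transpose_mul_mul_left {l m n : Type*} [Fintype l] [Fintype m] [Fintype n]
    (G : Matrix l n ℝ) (A : Matrix l m ℝ) (H : Matrix m n ℝ) :
    trace (Gᵀ * (A * H)) = trace ((Aᵀ * G)ᵀ * H) := by
  rw [transpose_mul, transpose_transpose, Matrix.mul_assoc]

theorem trace_transpose_mul_mul_right {l m n : Type*} [Fintype l] [Fintype m] [Fintype n]
    (G : Matrix l n ℝ) (H : Matrix l m ℝ) (z : Matrix m n ℝ) :
    trace (Gᵀ * (H * z)) = trace ((G * zᵀ)ᵀ * H) := by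
  rw [transpose_mul, transpose_transpose, Matrix.mul_assoc, trace_mul_comm z, Matrix.mul_assoc]

namespace HasGradientTripleAt

variable {d p : ℕ} {α β : Type*} [Fintype α] [Fintype β]
  {g : Matrix (Fin d) (Fin p) ℝ × Matrix (Fin d) (Fin p) ℝ × Matrix (Fin d) (Fin p) ℝ → ℝ}
  {Gq Gk Gv : Matrix (Fin d) (Fin p) ℝ}

theorem comp
    {f : Matrix α β ℝ → Matrix (Fin d) (Fin p) ℝ × Matrix (Fin d) (Fin p) ℝ ×
      Matrix (Fin d) (Fin p) ℝ}
    {f' : Matrix α β ℝ →L[ℝ] Matrix (Fin d) (Fin p) ℝ × Matrix (Fin d) (Fin p) ℝ ×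
      Matrix (Fin d) (Fin p) ℝ}
    {X G : Matrix α β ℝ} (hg : HasGradientTripleAt g Gq Gk Gv (f X)) (hf : HasFDerivAt f f' X)
    (hG : ∀ H, trace (Gqᵀ * (f' H).1) + trace (Gkᵀ * (f' H).2.1) + trace (Gvᵀ * (f' H).2.2) =
      trace (Gᵀ * H)) :
    HasGradientMatrixAt (g ∘ f) G X := by
  obtain ⟨D, hD, hDG⟩ := hg
  exact ⟨D.comp f', hD.comp X hf, fun H => by simp only [D.comp_apply, ← hG, ← hDG]⟩

variable {m : Type*} [Fintype m]

theorem comp_mul_left {Q K V : Matrix (Fin d) m ℝ} {z : Matrix m (Fin p) ℝ}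
    (hg : HasGradientTripleAt g Gq Gk Gv (Q * z, K * z, V * z)) :
    HasGradientMatrixAt (fun w => g (Q * w, K * w, V * w)) (Qᵀ * Gq + Kᵀ * Gk + Vᵀ * Gv) z := by
  let mulLeft (A : Matrix (Fin d) m ℝ) := (mulLeftLinearMap (Fin p) ℝ A).toContinuousLinearMap
  refine hg.comp ((mulLeft Q).prod ((mulLeft K).prod (mulLeft V))).hasFDerivAt fun H => ?_
  show trace (Gqᵀ * (Q * H)) + trace (Gkᵀ * (K * H)) + trace (Gvᵀ * (V * H)) = _
  simp only [trace_transpose_mul_mul_left, transpose_add, Matrix.add_mul, trace_add]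

theorem comp_mul_right_fst {Q : Matrix (Fin d) m ℝ} {z : Matrix m (Fin p) ℝ}
    {k v : Matrix (Fin d) (Fin p) ℝ} (hg : HasGradientTripleAt g Gq Gk Gv (Q * z, k, v)) :
    HasGradientMatrixAt (fun Q' => g (Q' * z, k, v)) (Gq * zᵀ) Q := by
  refine hg.comp ((mulRightLinearMap (Fin d) ℝ z).toContinuousLinearMap.hasFDerivAt.prodMk
    (hasFDerivAt_const _ _)) fun H => ?_
  show trace (Gqᵀ * (H * z)) + trace (Gkᵀ * 0) + trace (Gvᵀ * 0) = _
  simp only [Matrix.mul_zero, trace_zero, add_zero, trace_transpose_mul_mul_right]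

theorem comp_mul_right_snd {K : Matrix (Fin d) m ℝ} {z : Matrix m (Fin p) ℝ}
    {q v : Matrix (Fin d) (Fin p) ℝ} (hg : HasGradientTripleAt g Gq Gk Gv (q, K * z, v)) :
    HasGradientMatrixAt (fun K' => g (q, K' * z, v)) (Gk * zᵀ) K := by
  refine hg.comp ((hasFDerivAt_const _ _).prodMk
    ((mulRightLinearMap (Fin d) ℝ z).toContinuousLinearMap.hasFDerivAt.prodMk
      (hasFDerivAt_const _ _))) fun H => ?_
  show trace (Gqᵀ * 0) + trace (Gkᵀ * (H * z)) + trace (Gvᵀ * 0) = _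
  simp only [Matrix.mul_zero, trace_zero, add_zero, zero_add, trace_transpose_mul_mul_right]

theorem comp_mul_right_thd {V : Matrix (Fin d) m ℝ} {z : Matrix m (Fin p) ℝ}
    {q k : Matrix (Fin d) (Fin p) ℝ} (hg : HasGradientTripleAt g Gq Gk Gv (q, k, V * z)) :
    HasGradientMatrixAt (fun V' => g (q, k, V' * z)) (Gv * zᵀ) V := by
  refine hg.comp ((hasFDerivAt_const _ _).prodMk ((hasFDerivAt_const _ _).prodMk
    (mulRightLinearMap (Fin d) ℝ z).toContinuousLinearMap.hasFDerivAt)) fun H => ?_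
  show trace (Gqᵀ * 0) + trace (Gkᵀ * 0) + trace (Gvᵀ * (H * z)) = _
  simp only [Matrix.mul_zero, trace_zero, add_zero, zero_add, trace_transpose_mul_mul_right]

end HasGradientTripleAt

theorem april_batched_leakage_general {p c d n : ℕ}
    (g : Fin n →
      Matrix (Fin d) (Fin p) ℝ × Matrix (Fin d) (Fin p) ℝ × Matrix (Fin d) (Fin p) ℝ → ℝ)
    (Q K V : Matrix (Fin d) (Fin c) ℝ) (z : Fin n → Matrix (Fin c) (Fin p) ℝ)
    (Gq Gk Gv : Fin n → Matrix (Fin d) (Fin p) ℝ)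
    (hgrad : ∀ i, HasGradientTripleAt (g i) (Gq i) (Gk i) (Gv i)
      (Q * z i, K * z i, V * z i))
    (M : Fin n → Matrix (Fin c) (Fin p) ℝ)
    (hM : ∀ i, HasGradientMatrixAt (fun w => g i (Q * w, K * w, V * w)) (M i) (z i))
    (GQ GK GV : Matrix (Fin d) (Fin c) ℝ)
    (hGQ : HasGradientMatrixAt
      (fun Q' => ∑ i, g i (Q' * z i, K * z i, V * z i)) GQ Q)
    (hGK : HasGradientMatrixAt
      (fun K' => ∑ i, g i (Q * z i, K' * z i, V * z i)) GK K)
    (hGV : HasGradientMatrixAt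
      (fun V' => ∑ i, g i (Q * z i, K * z i, V' * z i)) GV V) :
    Qᵀ * GQ + Kᵀ * GK + Vᵀ * GV = ∑ i, M i * (z i)ᵀ := by
  have hM' (i : Fin n) : M i = Qᵀ * Gq i + Kᵀ * Gk i + Vᵀ * Gv i :=
    (hM i).unique (hgrad i).comp_mul_left
  have hGQ' : GQ = ∑ i, Gq i * (z i)ᵀ :=
    hGQ.unique (.sum _ fun i => (hgrad i).comp_mul_right_fst)
  have hGK' : GK = ∑ i, Gk i * (z i)ᵀ :=
    hGK.unique (.sum _ fun i => (hgrad i).comp_mul_right_snd)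
  have hGV' : GV = ∑ i, Gv i * (z i)ᵀ :=
    hGV.unique (.sum _ fun i => (hgrad i).comp_mul_right_thd)
  simp only [hM', hGQ', hGK', hGV', Matrix.mul_sum, Matrix.add_mul, Matrix.mul_assoc,
    Finset.sum_add_distrib]

theorem april_batched_leakage {p c d n : ℕ}
    (hp : 0 < p) (hc : 0 < c) (hd : 0 < d) (hn : 0 < n)
    (g : Fin n →
      Matrix (Fin d) (Fin p) ℝ × Matrix (Fin d) (Fin p) ℝ × Matrix (Fin d) (Fin p) ℝ → ℝ)
    (hg : ∀ i, Differentiable ℝ (g i))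
    (Q K V : Matrix (Fin d) (Fin c) ℝ) (z : Fin n → Matrix (Fin c) (Fin p) ℝ)
    (Gq Gk Gv : Fin n → Matrix (Fin d) (Fin p) ℝ)
    (hgrad : ∀ i, HasGradientTripleAt (g i) (Gq i) (Gk i) (Gv i)
      (Q * z i, K * z i, V * z i))
    (M : Fin n → Matrix (Fin c) (Fin p) ℝ)
    (hM : ∀ i, HasGradientMatrixAt (fun w => g i (Q * w, K * w, V * w)) (M i) (z i))
    (GQ GK GV : Matrix (Fin d) (Fin c) ℝ)
    (hGQ : HasGradientMatrixAt
      (fun Q' => ∑ i, g i (Q' * z i, K * z i, V * z i)) GQ Q)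
    (hGK : HasGradientMatrixAt
      (fun K' => ∑ i, g i (Q * z i, K' * z i, V * z i)) GK K)
    (hGV : HasGradientMatrixAt
      (fun V' => ∑ i, g i (Q * z i, K * z i, V' * z i)) GV V) :
    Qᵀ * GQ + Kᵀ * GK + Vᵀ * GV = ∑ i, M i * (z i)ᵀ :=
  april_batched_leakage_general g Q K V z Gq Gk Gv hgrad M hM GQ GK GV hGQ hGK hGV
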